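/- If 0 < b₀ < d, then the roots v_b and v_h in (−π, 0) of cos(v) − (a/b₀)·sin(v) = 1 and cos(v) − (a/d)·sin(v) = 1 respectively (with a > 0) satisfy v_b < v_h < 0. -/
import Mathlib


open Real

lemma key_root (a c v : ℝ) (ha : 0 < a) (hc : 0 < c) (hv : v ∈ Set.Ioo (-π) 0)
    (heq : Real.cos v - (a / c) * Real.sin v = 1) :
    v = 2 * Real.arctan (-(a / c)) := by
  obtain ⟨hv1, hv2⟩ := hv
  have hpi := Real.pi_pos
  have ht1 : -(π/2) < v/2 := by linarith
  have ht2 : v/2 < 0 := by linarith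
  have hsin : Real.sin (v/2) < 0 :=
    Real.sin_neg_of_neg_of_neg_pi_lt ht2 (by linarith)
  have hcos : 0 < Real.cos (v/2) :=
    Real.cos_pos_of_mem_Ioo ⟨ht1, by linarith⟩
  have hveq : v = 2 * (v/2) := by ring
  rw [hveq, Real.cos_two_mul, Real.sin_two_mul] at heq
  have hpyth := Real.sin_sq_add_cos_sq (v/2)
  have hkey : Real.sin (v/2) * (Real.sin (v/2) + (a/c) * Real.cos (v/2)) = 0 := by
    nlinarith
  have hfac : Real.sin (v/2) + (a/c) * Real.cos (v/2) = 0 := by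
    rcases mul_eq_zero.mp hkey with h | h
    · exact absurd h (ne_of_lt hsin)
    · exact h
  have htan : Real.tan (v/2) = -(a/c) := by
    rw [Real.tan_eq_sin_div_cos]
    field_simp at hfac ⊢
    linarith
  have := Real.arctan_tan (x := v/2) ht1 (by linarith)
  rw [htan] at this
  linarith
  
theorem stmt_10 (a b₀ d v_b v_h : ℝ) (ha : 0 < a) (hb₀ : 0 < b₀) (hbd : b₀ < d)
    (hvb : v_b ∈ Set.Ioo (-π) 0) (hvh : v_h ∈ Set.Ioo (-π) 0)
    (heqb : Real.cos v_b - (a / b₀) * Real.sin v_b = 1)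
    (heqh : Real.cos v_h - (a / d) * Real.sin v_h = 1) :
    v_b < v_h ∧ v_h < 0 := by
  have hd : 0 < d := lt_trans hb₀ hbd
  have h1 := key_root a b₀ v_b ha hb₀ hvb heqb
  have h2 := key_root a d v_h ha hd hvh heqh
  refine ⟨?_, hvh.2⟩
  rw [h1, h2]
  have hlt : -(a / b₀) < -(a / d) := by
    have : a / d < a / b₀ := div_lt_div_of_pos_left ha hb₀ hbd
    linarith
  have := Real.arctan_strictMono hlt
  linarith
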